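/- arXiv:2112.10987 — 4 statements merged into one kernel-verified Lean document; each statement's English description precedes it below -/
import Mathlib

section
/- Let ε ∈ (0, 1/9) and let S be a finite nonempty subset of the closed unit ball of ℝ^m (vectors of ℓ₂-norm at most 1). If u and v are drawn independently and uniformly at random from S, then Pr[⟨u,v⟩ ≥ -3ε] > 2ε. -/
/-! Since `∑_{u,v ∈ S} ⟪u, v⟫ = ‖∑_{u ∈ S} u‖² ≥ 0`, the inner product of a uniform random pair
has nonnegative mean, while it is at most `1` on the unit ball. If it were below `-3ε` with
probability at least `1 - 2ε`, the mean would be at most `2ε - 3ε(1 - 2ε) < 0` for `ε < 1/6`. -/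

open Finset RealInnerProductSpace

theorem sum_inner_product_self_nonneg {E : Type*} [NormedAddCommGroup E] [InnerProductSpace ℝ E]
    (S : Finset E) : 0 ≤ ∑ p ∈ S ×ˢ S, ⟪p.1, p.2⟫ := by
  have h : ∑ p ∈ S ×ˢ S, ⟪p.1, p.2⟫ = ⟪∑ u ∈ S, u, ∑ v ∈ S, v⟫ := by
    rw [sum_product, sum_inner]
    exact sum_congr rfl fun u _ => (inner_sum _ _ _).symm
  exact h ▸ real_inner_self_nonneg

theorem real_inner_le_one_of_norm_le_one {E : Type*} [NormedAddCommGroup E]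
    [InnerProductSpace ℝ E] {u v : E} (hu : ‖u‖ ≤ 1) (hv : ‖v‖ ≤ 1) : ⟪u, v⟫ ≤ 1 :=
  (real_inner_le_norm u v).trans (mul_le_one₀ hu (norm_nonneg v) hv)

theorem neg_mul_card_le_mul_card_filter_le {ι : Type*} (s : Finset ι) (f : ι → ℝ) (c : ℝ)
    (hf : ∀ x ∈ s, f x ≤ 1) (hsum : 0 ≤ ∑ x ∈ s, f x) :
    -c * #s ≤ (1 - c) * #{x ∈ s | c ≤ f x} := by
  have hgood : ∑ x ∈ s with c ≤ f x, f x ≤ #{x ∈ s | c ≤ f x} := by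
    simpa using sum_le_sum fun x hx => hf x (mem_filter.mp hx).1
  have hbad : ∑ x ∈ s with ¬c ≤ f x, f x ≤ c * #{x ∈ s | ¬c ≤ f x} := by
    simpa [mul_comm] using sum_le_sum (g := fun _ => c) fun x (hx : x ∈ {x ∈ s | ¬c ≤ f x}) =>
      (not_le.mp (mem_filter.mp hx).2).le
  have hcard : (#{x ∈ s | c ≤ f x} : ℝ) + #{x ∈ s | ¬c ≤ f x} = #s := by
    exact_mod_cast card_filter_add_card_filter_not (fun x => c ≤ f x)
  rw [← sum_filter_add_sum_filter_not s (fun x => c ≤ f x)] at hsum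
  linear_combination hsum + hgood + hbad + c * hcard

theorem stmt0 (m : ℕ) (ε : ℝ) (hε : 0 < ε) (hε9 : ε < 1/9)
    (S : Finset (EuclideanSpace ℝ (Fin m))) (hS : S.Nonempty)
    (hball : ∀ u ∈ S, ‖u‖ ≤ 1) :
    (((S ×ˢ S).filter (fun p => (inner ℝ p.1 p.2 : ℝ) ≥ -3*ε)).card : ℝ)
      / ((S.card : ℝ) * S.card) > 2*ε := by
  have hbound := neg_mul_card_le_mul_card_filter_le (S ×ˢ S) (fun p => ⟪p.1, p.2⟫) (-3 * ε)
    (fun p hp => real_inner_le_one_of_norm_le_one (hball _ (mem_product.mp hp).1)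
      (hball _ (mem_product.mp hp).2))
    (sum_inner_product_self_nonneg S)
  rw [card_product, Nat.cast_mul] at hbound
  have hpos : (0 : ℝ) < #S * #S := by positivity
  rw [gt_iff_lt, lt_div_iff₀ hpos]
  nlinarith
end

section
/- Let x₁, x₂, x₃ ∈ ℝ satisfy |x₁| ≥ |x₂| ≥ |x₃| and |x₁| ≥ a for some a ≥ 0. Let σ₁, σ₂ be independent Rademacher random variables (uniform on {-1,1}). Then Pr[σ₁x₁ + σ₂x₂ + σ₁σ₂x₃ ≥ a] ≥ 1/4 and Pr[σ₁x₁ + σ₂x₂ + σ₁σ₂x₃ ≤ -a] ≥ 1/4. -/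
open Finset

lemma aux_card (p : ℝ × ℝ → Prop) [DecidablePred p] (σ : ℝ × ℝ)
    (hσ : σ ∈ (({-1,1} : Finset ℝ) ×ˢ ({-1,1} : Finset ℝ)))
    (hp : p σ) :
    ((((({-1,1} : Finset ℝ) ×ˢ ({-1,1} : Finset ℝ)).filter p).card : ℝ) / 4 ≥ 1/4) := by
  have h1 : 1 ≤ ((({-1,1} : Finset ℝ) ×ˢ ({-1,1} : Finset ℝ)).filter p).card :=
    Finset.one_le_card.mpr ⟨σ, Finset.mem_filter.mpr ⟨hσ, hp⟩⟩
  have h2 : (1:ℝ) ≤ (((({-1,1} : Finset ℝ) ×ˢ ({-1,1} : Finset ℝ)).filter p).card : ℝ) := by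
    exact_mod_cast h1
  linarith

theorem stmt2 (x₁ x₂ x₃ a : ℝ) (h21 : |x₂| ≤ |x₁|) (h32 : |x₃| ≤ |x₂|)
    (ha : a ≤ |x₁|) (ha0 : 0 ≤ a) :
    ((((({-1,1} : Finset ℝ) ×ˢ ({-1,1} : Finset ℝ)).filter
        (fun σ => a ≤ σ.1*x₁ + σ.2*x₂ + σ.1*σ.2*x₃)).card : ℝ) / 4 ≥ 1/4) ∧
    ((((({-1,1} : Finset ℝ) ×ˢ ({-1,1} : Finset ℝ)).filter
        (fun σ => σ.1*x₁ + σ.2*x₂ + σ.1*σ.2*x₃ ≤ -a)).card : ℝ) / 4 ≥ 1/4) := by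
  set s₂ : ℝ := if 0 ≤ x₂ then 1 else -1 with hs₂
  set s₁ : ℝ := if 0 ≤ x₁ + s₂ * x₃ then 1 else -1 with hs₁
  have hs₂mem : s₂ ∈ ({-1,1} : Finset ℝ) := by
    simp only [hs₂]; split <;> simp
  have hs₁mem : s₁ ∈ ({-1,1} : Finset ℝ) := by
    simp only [hs₁]; split <;> simp
  have h2abs : s₂ * x₂ = |x₂| := by
    simp only [hs₂]; split
    · rw [abs_of_nonneg (by assumption)]; ring
    · rw [abs_of_neg (by linarith [not_le.mp (by assumption)])]; ring
  have h1abs : s₁ * (x₁ + s₂ * x₃) = |x₁ + s₂ * x₃| := by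
    simp only [hs₁]; split
    · rw [abs_of_nonneg (by assumption)]; ring
    · rw [abs_of_neg (by linarith [not_le.mp (by assumption)])]; ring
  have habs3 : |s₂ * x₃| = |x₃| := by
    rw [abs_mul]; simp only [hs₂]; split <;> simp
  have hkey : |x₁| - |x₃| ≤ |x₁ + s₂ * x₃| := by
    have := abs_add_le (x₁ + s₂ * x₃) (-(s₂ * x₃))
    simp only [add_neg_cancel_right, abs_neg, habs3] at this
    linarith
  constructor
  · refine aux_card _ (s₁, s₂) (Finset.mem_product.mpr ⟨hs₁mem, hs₂mem⟩) ?_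
    have : a ≤ s₁ * (x₁ + s₂ * x₃) + s₂ * x₂ := by
      rw [h1abs, h2abs]; linarith
    simp only; nlinarith [this]
  · set t₂ : ℝ := if 0 ≤ x₂ then -1 else 1 with ht₂
    set t₁ : ℝ := if 0 ≤ x₁ + t₂ * x₃ then -1 else 1 with ht₁
    have ht₂mem : t₂ ∈ ({-1,1} : Finset ℝ) := by
      simp only [ht₂]; split <;> simp
    have ht₁mem : t₁ ∈ ({-1,1} : Finset ℝ) := by
      simp only [ht₁]; split <;> simp
    have t2abs : t₂ * x₂ = -|x₂| := by
      simp only [ht₂]; split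
      · rw [abs_of_nonneg (by assumption)]; ring
      · rw [abs_of_neg (by linarith [not_le.mp (by assumption)])]; ring
    have t1abs : t₁ * (x₁ + t₂ * x₃) = -|x₁ + t₂ * x₃| := by
      simp only [ht₁]; split
      · rw [abs_of_nonneg (by assumption)]; ring
      · rw [abs_of_neg (by linarith [not_le.mp (by assumption)])]; ring
    have tabs3 : |t₂ * x₃| = |x₃| := by
      rw [abs_mul]; simp only [ht₂]; split <;> simp
    have tkey : |x₁| - |x₃| ≤ |x₁ + t₂ * x₃| := by
      have := abs_add_le (x₁ + t₂ * x₃) (-(t₂ * x₃))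
      simp only [add_neg_cancel_right, abs_neg, tabs3] at this
      linarith
    refine aux_card _ (t₁, t₂) (Finset.mem_product.mpr ⟨ht₁mem, ht₂mem⟩) ?_
    have : t₁ * (x₁ + t₂ * x₃) + t₂ * x₂ ≤ -a := by
      rw [t1abs, t2abs]; linarith
    simp only; nlinarith [this]
end

section
/- Let A ∈ ℝ^{m×N}, let p ≠ q be column indices with |⟨A_{*,p}, A_{*,q}⟩| ≥ c, and let σ ∈ {-1,1}^N be a vector of independent Rademacher variables. Set v = σ_p A_{*,p} + σ_q A_{*,q} + ν where ν = ∑_{i∈S\{p,q}} σ_i A_{*,i} for some set S containing p and q. Then conditioned on any fixing of {σ_i : i ∈ S\{p,q}}, there exists O ∈ ℝ (depending on the fixing) such that Pr[‖v‖₂² ≥ O + 2c] ≥ 1/4 and Pr[‖v‖₂² ≤ O - 2c] ≥ 1/4, where the probability is over σ_p, σ_q. -/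
open Finset

lemma card_div_four_aux (P : ℝ × ℝ → Prop) [DecidablePred P] (s : ℝ × ℝ)
    (hs : s ∈ (({-1,1} : Finset ℝ) ×ˢ ({-1,1} : Finset ℝ)))
    (h : P s) :
    ((((({-1,1} : Finset ℝ) ×ˢ ({-1,1} : Finset ℝ)).filter P).card : ℝ) / 4 ≥ 1/4) := by
  have h1 : 1 ≤ ((({-1,1} : Finset ℝ) ×ˢ ({-1,1} : Finset ℝ)).filter P).card :=
    Finset.card_pos.mpr ⟨s, Finset.mem_filter.mpr ⟨hs, h⟩⟩
  have h2 : (1 : ℝ) ≤ ((({-1,1} : Finset ℝ) ×ˢ ({-1,1} : Finset ℝ)).filter P).card := by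
    exact_mod_cast h1
  linarith

lemma pick_aux (c a b x y : ℝ) (h : x + y + 8*c ≤ a + b) :
    ∃ O : ℝ, ((O + 2*c ≤ a) ∨ (O + 2*c ≤ b)) ∧ ((x ≤ O - 2*c) ∨ (y ≤ O - 2*c)) := by
  rcases le_total a b with h1 | h1 <;> rcases le_total x y with h2 | h2
  · exact ⟨(b + x)/2, Or.inr (by linarith), Or.inl (by linarith)⟩
  · exact ⟨(b + y)/2, Or.inr (by linarith), Or.inr (by linarith)⟩
  · exact ⟨(a + x)/2, Or.inl (by linarith), Or.inl (by linarith)⟩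
  · exact ⟨(a + y)/2, Or.inl (by linarith), Or.inr (by linarith)⟩

theorem stmt4 (m N : ℕ) (A : Matrix (Fin m) (Fin N) ℝ) (p q : Fin N) (hpq : p ≠ q)
    (c : ℝ) (hc : 0 ≤ c) (hin : c ≤ |∑ l, A l p * A l q|)
    (S : Finset (Fin N)) (hp : p ∈ S) (hq : q ∈ S)
    (σ : Fin N → ℝ) (hσ : ∀ i, σ i = 1 ∨ σ i = -1) :
    ∃ O : ℝ,
      ((((({-1,1} : Finset ℝ) ×ˢ ({-1,1} : Finset ℝ)).filter
          (fun s => O + 2*c ≤ ∑ l, (s.1 * A l p + s.2 * A l q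
              + ∑ i ∈ (S.erase p).erase q, σ i * A l i)^2)).card : ℝ) / 4 ≥ 1/4) ∧
      ((((({-1,1} : Finset ℝ) ×ˢ ({-1,1} : Finset ℝ)).filter
          (fun s => (∑ l, (s.1 * A l p + s.2 * A l q
              + ∑ i ∈ (S.erase p).erase q, σ i * A l i)^2) ≤ O - 2*c)).card : ℝ) / 4 ≥ 1/4) := by
  classical
  set ν : Fin m → ℝ := fun l => ∑ i ∈ (S.erase p).erase q, σ i * A l i with hν
  set u1 := ∑ l, ((1:ℝ) * A l p + (1:ℝ) * A l q + ν l)^2 with hu1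
  set u2 := ∑ l, ((-1:ℝ) * A l p + (-1:ℝ) * A l q + ν l)^2 with hu2
  set v1 := ∑ l, ((1:ℝ) * A l p + (-1:ℝ) * A l q + ν l)^2 with hv1
  set v2 := ∑ l, ((-1:ℝ) * A l p + (1:ℝ) * A l q + ν l)^2 with hv2
  have key : u1 + u2 - v1 - v2 = 8 * ∑ l, A l p * A l q := by
    rw [hu1, hu2, hv1, hv2, Finset.mul_sum, ← Finset.sum_add_distrib,
      ← Finset.sum_sub_distrib, ← Finset.sum_sub_distrib]
    exact Finset.sum_congr rfl fun l _ => by ring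
  have hmem11 : ((1:ℝ), (1:ℝ)) ∈ (({-1,1} : Finset ℝ) ×ˢ ({-1,1} : Finset ℝ)) := by
    simp [Finset.mem_product]
  have hmemmm : ((-1:ℝ), (-1:ℝ)) ∈ (({-1,1} : Finset ℝ) ×ˢ ({-1,1} : Finset ℝ)) := by
    simp [Finset.mem_product]
  have hmem1m : ((1:ℝ), (-1:ℝ)) ∈ (({-1,1} : Finset ℝ) ×ˢ ({-1,1} : Finset ℝ)) := by
    simp [Finset.mem_product]
  have hmemm1 : ((-1:ℝ), (1:ℝ)) ∈ (({-1,1} : Finset ℝ) ×ˢ ({-1,1} : Finset ℝ)) := by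
    simp [Finset.mem_product]
  rcases le_abs.mp hin with hX | hX
  · -- X ≥ c
    have h8 : v1 + v2 + 8*c ≤ u1 + u2 := by nlinarith [key]
    obtain ⟨O, hHi, hLo⟩ := pick_aux c u1 u2 v1 v2 h8
    refine ⟨O, ?_, ?_⟩
    · rcases hHi with h | h
      · exact card_div_four_aux _ ((1:ℝ), (1:ℝ)) hmem11 h
      · exact card_div_four_aux _ ((-1:ℝ), (-1:ℝ)) hmemmm h
    · rcases hLo with h | h
      · exact card_div_four_aux _ ((1:ℝ), (-1:ℝ)) hmem1m h
      · exact card_div_four_aux _ ((-1:ℝ), (1:ℝ)) hmemm1 h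
  · -- X ≤ -c
    have h8 : u1 + u2 + 8*c ≤ v1 + v2 := by nlinarith [key]
    obtain ⟨O, hHi, hLo⟩ := pick_aux c v1 v2 u1 u2 h8
    refine ⟨O, ?_, ?_⟩
    · rcases hHi with h | h
      · exact card_div_four_aux _ ((1:ℝ), (-1:ℝ)) hmem1m h
      · exact card_div_four_aux _ ((-1:ℝ), (1:ℝ)) hmemm1 h
    · rcases hLo with h | h
      · exact card_div_four_aux _ ((1:ℝ), (1:ℝ)) hmem11 h
      · exact card_div_four_aux _ ((-1:ℝ), (-1:ℝ)) hmemmm h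
end

section
/- Let s = 1/(9ε), ε ∈ (0,1/9), and let (q_x)_{x∈[s]}, (p_x)_{x∈[s]} satisfy 0 ≤ p_x ≤ q_x, ∑_x q_x = 1, p̂ := ∑_x p_x ≤ ε/12, and (∑_x x·p_x)/(∑_x x·q_x) ≥ ε/2. Set Δ = ∑_x x·q_x. Then p̂ ≥ 9ε²Δ/4. -/
open Finset

theorem stmt13 (ε : ℝ) (hε : 0 < ε) (hε9 : ε < 1/9)
    (s : ℕ) (hs : (s : ℝ) = 1/(9*ε)) (q pf : ℕ → ℝ)
    (hp0 : ∀ x ∈ Finset.Icc 1 s, 0 ≤ pf x)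
    (hpq : ∀ x ∈ Finset.Icc 1 s, pf x ≤ q x)
    (hsum : ∑ x ∈ Finset.Icc 1 s, q x = 1)
    (hphat : ∑ x ∈ Finset.Icc 1 s, pf x ≤ ε/12)
    (hratio : ε/2 ≤ (∑ x ∈ Finset.Icc 1 s, (x : ℝ) * pf x)
        / (∑ x ∈ Finset.Icc 1 s, (x : ℝ) * q x)) :
    ∑ x ∈ Finset.Icc 1 s, pf x
      ≥ 9 * ε^2 * (∑ x ∈ Finset.Icc 1 s, (x : ℝ) * q x) / 4 := by
  set Δ := ∑ x ∈ Finset.Icc 1 s, (x : ℝ) * q x with hΔdef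
  set P := ∑ x ∈ Finset.Icc 1 s, pf x with hPdef
  have hq0 : ∀ x ∈ Finset.Icc 1 s, (0:ℝ) ≤ q x := fun x hx =>
    le_trans (hp0 x hx) (hpq x hx)
  have hΔ1 : (1:ℝ) ≤ Δ := by
    rw [← hsum]
    apply Finset.sum_le_sum
    intro x hx
    have hx1 : 1 ≤ x := (Finset.mem_Icc.mp hx).1
    have : (1:ℝ) ≤ (x:ℝ) := by exact_mod_cast hx1
    nlinarith [hq0 x hx]
  have hΔpos : (0:ℝ) < Δ := by linarith
  have hXP : ε/2 * Δ ≤ ∑ x ∈ Finset.Icc 1 s, (x : ℝ) * pf x := by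
    have := (le_div_iff₀ hΔpos).mp hratio
    linarith
  have hXPs : ∑ x ∈ Finset.Icc 1 s, (x : ℝ) * pf x ≤ (s:ℝ) * P := by
    rw [hPdef, Finset.mul_sum]
    apply Finset.sum_le_sum
    intro x hx
    have hxs : (x:ℝ) ≤ s := Nat.cast_le.mpr (Finset.mem_Icc.mp hx).2
    exact mul_le_mul_of_nonneg_right hxs (hp0 x hx)
  have hsP : (s:ℝ) * P = P / (9*ε) := by rw [hs]; ring
  have h9 : 0 < 9*ε := by linarith
  have : ε/2 * Δ ≤ P / (9*ε) := by linarith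
  have h2 : ε/2 * Δ * (9*ε) ≤ P := (le_div_iff₀ h9).mp this
  rw [ge_iff_le, div_le_iff₀ (by norm_num : (0:ℝ) < 4)]
  nlinarith
end
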